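/- arXiv:1404.2848 — 3 statements merged into one kernel-verified Lean document; each statement's English description precedes it below -/
import Mathlib

section
/- Let d ≥ 1 be a natural number. If d is odd, then M₂(ℝ) ⊗_ℝ ℍ^{⊗(d-1)} is isomorphic as an ℝ-algebra to M_{2^d}(ℝ); if d is even, then M₂(ℝ) ⊗_ℝ ℍ^{⊗(d-1)} is isomorphic as an ℝ-algebra to M_{2^{d-1}}(ℍ). -/
open scoped TensorProduct PiTensorProduct Quaternion

noncomputable instance quaternionPiTensorSemiring (n : ℕ) :
    Semiring (⨂[ℝ] _ : Fin n, Quaternion ℝ) := PiTensorProduct.instSemiring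

noncomputable instance quaternionPiTensorAlgebra (n : ℕ) :
    Algebra ℝ (⨂[ℝ] _ : Fin n, Quaternion ℝ) := PiTensorProduct.instAlgebra

/-!
Sending `p ⊗ q` to `x ↦ p x q̄` maps `ℍ ⊗ ℍ` onto `End_ℝ ℍ ≅ M₄(ℝ)`: the image contains all
left multiplications and the projection `x ↦ re x = ¼ ∑ₑ e x ē` (`e = 1, i, j, k`), and these
generate every endomorphism; both sides have dimension 16, so it is an isomorphism. Hence
`ℍ^{⊗2k} ≅ M_{4^k}(ℝ)` and `M₂(ℝ) ⊗ ℍ^{⊗2k} ≅ M_{2^{2k+1}}(ℝ)`, while one more factor `ℍ` turns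
`M_N(ℝ)` into `M_N(ℝ) ⊗ ℍ ≅ M_N(ℍ)`.
-/

namespace Matrix

variable (R : Type*) [CommSemiring R]

noncomputable def finMulAlgEquiv (m n : ℕ) :
    Matrix (Fin m) (Fin m) R ⊗[R] Matrix (Fin n) (Fin n) R ≃ₐ[R]
      Matrix (Fin (m * n)) (Fin (m * n)) R :=
  (kroneckerAlgEquiv _ _ R).trans (reindexAlgEquiv R R finProdFinEquiv)

noncomputable def finOneAlgEquiv : Matrix (Fin 1) (Fin 1) R ≃ₐ[R] R :=
  .ofLinearEquiv uniqueLinearEquiv (by simp) fun x y => by simp [mul_apply]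

noncomputable def tensorAlgEquiv (A : Type*) [Semiring A] [Algebra R A]
    (m : Type*) [Fintype m] [DecidableEq m] : Matrix m m R ⊗[R] A ≃ₐ[R] Matrix m m A :=
  (Algebra.TensorProduct.comm R _ _).trans (matrixEquivTensor m R A).symm

end Matrix

namespace PiTensorProduct

variable {R ι ι₂ A : Type*} [CommSemiring R] [Semiring A] [Algebra R A]

variable (R ι ι₂ A) in
noncomputable def tmulAlgEquiv :
    (⨂[R] _ : ι, A) ⊗[R] (⨂[R] _ : ι₂, A) ≃ₐ[R] ⨂[R] _ : ι ⊕ ι₂, A :=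
  .ofLinearEquiv (tmulEquiv R A)
    (by simp [Algebra.TensorProduct.one_def, one_def, ← Sum.elim_one_one])
    ((LinearMap.map_mul_iff _).2 <| by ext; simp [← Sum.elim_mul_mul])

variable (R A) in
noncomputable def reindexAlgEquiv (e : ι ≃ ι₂) : (⨂[R] _ : ι, A) ≃ₐ[R] ⨂[R] _ : ι₂, A :=
  .ofLinearEquiv (reindex R (fun _ => A) e) (by simp [one_def]; rfl)
    ((LinearMap.map_mul_iff _).2 <| by ext; simp; rfl)

variable (R ι A) in
noncomputable def isEmptyAlgEquiv [IsEmpty ι] : (⨂[R] _ : ι, A) ≃ₐ[R] R :=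
  .ofLinearEquiv (isEmptyEquiv ι) (by simp [one_def])
    ((LinearMap.map_mul_iff _).2 <| by ext; simp)

variable (R A) in
noncomputable def subsingletonAlgEquiv [Subsingleton ι] (i₀ : ι) : (⨂[R] _ : ι, A) ≃ₐ[R] A :=
  .ofLinearEquiv (subsingletonEquiv i₀) (by simp [one_def])
    ((LinearMap.map_mul_iff _).2 <| by ext; simp)

variable (R A) in
noncomputable def finAddAlgEquiv (m n : ℕ) :
    (⨂[R] _ : Fin (m + n), A) ≃ₐ[R] (⨂[R] _ : Fin m, A) ⊗[R] (⨂[R] _ : Fin n, A) :=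
  (reindexAlgEquiv R A finSumFinEquiv.symm).trans (tmulAlgEquiv R (Fin m) (Fin n) A).symm

variable (R A) in
noncomputable def finSuccAlgEquiv (n : ℕ) :
    (⨂[R] _ : Fin (n + 1), A) ≃ₐ[R] (⨂[R] _ : Fin n, A) ⊗[R] A :=
  (finAddAlgEquiv R A n 1).trans (Algebra.TensorProduct.congr .refl (subsingletonAlgEquiv R A 0))

variable (R A) in
noncomputable def finTwoAlgEquiv : (⨂[R] _ : Fin 2, A) ≃ₐ[R] A ⊗[R] A :=
  (finSuccAlgEquiv R A 1).trans (Algebra.TensorProduct.congr (subsingletonAlgEquiv R A 0) .refl)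

noncomputable def finTwoMulAlgEquivMatrix {n : ℕ} (e : A ⊗[R] A ≃ₐ[R] Matrix (Fin n) (Fin n) R) :
    ∀ k : ℕ, (⨂[R] _ : Fin (2 * k), A) ≃ₐ[R] Matrix (Fin (n ^ k)) (Fin (n ^ k)) R
  | 0 => (isEmptyAlgEquiv R (Fin 0) A).trans <| (Matrix.finOneAlgEquiv R).symm.trans <|
      Matrix.reindexAlgEquiv R R (finCongr (pow_zero n).symm)
  | k + 1 => (finAddAlgEquiv R A (2 * k) 2).trans <|
      (Algebra.TensorProduct.congr (finTwoMulAlgEquivMatrix e k)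
        ((finTwoAlgEquiv R A).trans e)).trans <|
      (Matrix.finMulAlgEquiv R _ _).trans <|
      Matrix.reindexAlgEquiv R R (finCongr (pow_succ n k).symm)

end PiTensorProduct

namespace Quaternion

variable {K : Type*} [Field K]

-- `QuaternionAlgebra.basisOneIJK` restated at the type `ℍ[K]`, so that the `Quaternion` simp lemmas
-- apply to its vectors.
variable (K) in
noncomputable def basisOneIJK : Module.Basis (Fin 4) K ℍ[K] :=
  QuaternionAlgebra.basisOneIJK (-1) 0 (-1)

@[simp] theorem basisOneIJK_repr (x : ℍ[K]) :
    (basisOneIJK K).repr x = ![x.re, x.imI, x.imJ, x.imK] := rfl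

theorem basisOneIJK_components (a : Fin 4) :
    ![(basisOneIJK K a).re, (basisOneIJK K a).imI, (basisOneIJK K a).imJ, (basisOneIJK K a).imK] =
      Pi.single a 1 := by
  rw [← basisOneIJK_repr, Module.Basis.repr_self]
  ext
  simp [Finsupp.single_apply, Pi.single_apply, eq_comm]

@[simp] theorem re_basisOneIJK (a : Fin 4) :
    (basisOneIJK K a).re = (Pi.single a 1 : Fin 4 → K) 0 :=
  congr_fun (basisOneIJK_components a) 0

@[simp] theorem imI_basisOneIJK (a : Fin 4) :
    (basisOneIJK K a).imI = (Pi.single a 1 : Fin 4 → K) 1 :=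
  congr_fun (basisOneIJK_components a) 1

@[simp] theorem imJ_basisOneIJK (a : Fin 4) :
    (basisOneIJK K a).imJ = (Pi.single a 1 : Fin 4 → K) 2 :=
  congr_fun (basisOneIJK_components a) 2

@[simp] theorem imK_basisOneIJK (a : Fin 4) :
    (basisOneIJK K a).imK = (Pi.single a 1 : Fin 4 → K) 3 :=
  congr_fun (basisOneIJK_components a) 3

theorem sum_re_star_basisOneIJK_mul_smul (x : ℍ[K]) :
    ∑ a, (star (basisOneIJK K a) * x).re • basisOneIJK K a = x := by
  ext <;> simp [Fin.sum_univ_four]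

theorem sum_basisOneIJK_mul_mul_star (x : ℍ[K]) :
    ∑ a, basisOneIJK K a * x * star (basisOneIJK K a) = (4 : K) • (x.re : ℍ[K]) := by
  ext <;> simp [Fin.sum_univ_four]
  ring

variable [NeZero (2 : K)]

open MulOpposite in
theorem mulLeftRight_surjective : Function.Surjective (AlgHom.mulLeftRight K ℍ[K]) := by
  have h4 : (4 : K) ≠ 0 := by
    rw [show (4 : K) = 2 * 2 by norm_num]
    exact mul_ne_zero two_ne_zero two_ne_zero
  set t : ℍ[K] ⊗[K] ℍ[K]ᵐᵒᵖ := ∑ a, ((4 : K)⁻¹ • basisOneIJK K a) ⊗ₜ op (star (basisOneIJK K a))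
  have ht (x : ℍ[K]) : AlgHom.mulLeftRight K ℍ[K] t x = (x.re : ℍ[K]) := by
    simp only [t, map_sum, LinearMap.sum_apply, AlgHom.mulLeftRight_apply, unop_op, smul_mul_assoc]
    rw [← Finset.smul_sum, sum_basisOneIJK_mul_mul_star, inv_smul_smul₀ h4]
  -- every `f` is `x ↦ ∑ₐ f(eₐ) re(ēₐ x)`, built from `t` and left multiplications
  intro f
  refine ⟨∑ a, (f (basisOneIJK K a) ⊗ₜ 1) * t * (star (basisOneIJK K a) ⊗ₜ 1),
    LinearMap.ext fun x => ?_⟩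
  simp only [map_sum, map_mul, LinearMap.sum_apply, Module.End.mul_apply,
    AlgHom.mulLeftRight_apply, ht, unop_one, mul_one]
  conv_rhs => rw [← sum_re_star_basisOneIJK_mul_smul x]
  simp only [map_sum, map_smul, mul_coe_eq_smul]

instance : IsAzumaya K ℍ[K] where
  bij := by
    refine ⟨(LinearMap.injective_iff_surjective_of_finrank_eq_finrank
      (f := (AlgHom.mulLeftRight K ℍ[K]).toLinearMap) ?_).2
      mulLeftRight_surjective, mulLeftRight_surjective⟩
    simp [Module.finrank_tensorProduct, Module.finrank_linearMap, MulOpposite.finrank]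

variable (K) in
noncomputable def tensorSelfAlgEquivMatrix : ℍ[K] ⊗[K] ℍ[K] ≃ₐ[K] Matrix (Fin 4) (Fin 4) K :=
  (Algebra.TensorProduct.congr .refl starAe).trans <|
    (AlgEquiv.ofBijective _ IsAzumaya.bij).trans (algEquivMatrix (basisOneIJK K))

end Quaternion

section

variable (K : Type*) [Field K] [NeZero (2 : K)]

noncomputable def matrixFinTwoTensorQuaternionEvenPowAlgEquiv (k : ℕ) :
    Matrix (Fin 2) (Fin 2) K ⊗[K] (⨂[K] _ : Fin (2 * k), ℍ[K]) ≃ₐ[K]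
      Matrix (Fin (2 ^ (2 * k + 1))) (Fin (2 ^ (2 * k + 1))) K :=
  (Algebra.TensorProduct.congr .refl
      (PiTensorProduct.finTwoMulAlgEquivMatrix (Quaternion.tensorSelfAlgEquivMatrix K) k)).trans <|
    (Matrix.finMulAlgEquiv K 2 _).trans <|
      Matrix.reindexAlgEquiv K K (finCongr (by rw [pow_succ, pow_mul]; ring))

noncomputable def matrixFinTwoTensorQuaternionOddPowAlgEquiv (k : ℕ) :
    Matrix (Fin 2) (Fin 2) K ⊗[K] (⨂[K] _ : Fin (2 * k + 1), ℍ[K]) ≃ₐ[K]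
      Matrix (Fin (2 ^ (2 * k + 1))) (Fin (2 ^ (2 * k + 1))) ℍ[K] :=
  (Algebra.TensorProduct.congr .refl (PiTensorProduct.finSuccAlgEquiv K ℍ[K] (2 * k))).trans <|
    (Algebra.TensorProduct.assoc K K K _ _ _).symm.trans <|
      (Algebra.TensorProduct.congr (matrixFinTwoTensorQuaternionEvenPowAlgEquiv K k) .refl).trans
        (Matrix.tensorAlgEquiv K ℍ[K] _)

end

/-- For `d ≥ 1`: if `d` is odd, then `M₂(ℝ) ⊗ℝ ℍ^{⊗(d-1)}` is isomorphic as an `ℝ`-algebra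
to `M_{2^d}(ℝ)`; if `d` is even, it is isomorphic to `M_{2^{d-1}}(ℍ)`. -/
theorem matrix_tensor_quaternion_power_iso (d : ℕ) (hd : 1 ≤ d) :
    (Odd d → Nonempty ((Matrix (Fin 2) (Fin 2) ℝ) ⊗[ℝ] (⨂[ℝ] _ : Fin (d - 1), Quaternion ℝ)
      ≃ₐ[ℝ] Matrix (Fin (2 ^ d)) (Fin (2 ^ d)) ℝ)) ∧
    (Even d → Nonempty ((Matrix (Fin 2) (Fin 2) ℝ) ⊗[ℝ] (⨂[ℝ] _ : Fin (d - 1), Quaternion ℝ)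
      ≃ₐ[ℝ] Matrix (Fin (2 ^ (d - 1))) (Fin (2 ^ (d - 1))) (Quaternion ℝ))) := by
  obtain ⟨n, rfl⟩ := Nat.exists_eq_add_of_le' hd
  rw [Nat.add_sub_cancel]
  refine ⟨fun ⟨k, hk⟩ => ?_, fun ⟨m, hm⟩ => ?_⟩
  · obtain rfl : n = 2 * k := by omega
    exact ⟨matrixFinTwoTensorQuaternionEvenPowAlgEquiv ℝ k⟩
  · obtain ⟨k, rfl⟩ : ∃ k, n = 2 * k + 1 := ⟨m - 1, by omega⟩
    exact ⟨matrixFinTwoTensorQuaternionOddPowAlgEquiv ℝ k⟩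
end

section
/- Let τ be a point of the upper half-plane 𝓗. Then for all α, β ∈ M_{g×2}(ℝ), E(α · J_τ, β · J_τ) = E(α, β); that is, E is compatible with the complex structure J_τ. -/
open Matrix

/-- The standard symplectic `2×2` matrix `J₂ = [[0,1],[-1,0]]`. -/
def J2 : Matrix (Fin 2) (Fin 2) ℝ := !![0, 1; -1, 0]

/-- The bilinear form `E(α,β) = tr(αᵀ S β J₂)` on the space of real `g×2` matrices. -/
def Eform (g : ℕ) (S : Matrix (Fin g) (Fin g) ℝ) (α β : Matrix (Fin g) (Fin 2) ℝ) : ℝ :=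
  (αᵀ * S * β * J2).trace

/-- For `τ` in the upper half-plane, `J_τ = (1/Im τ) • [[-Re τ, |τ|²], [-1, Re τ]]`. -/
noncomputable def Jmat (τ : ℂ) : Matrix (Fin 2) (Fin 2) ℝ :=
  (τ.im)⁻¹ • !![-τ.re, Complex.normSq τ; -1, τ.re]

/-! `J_τ` has determinant `1`, and every `2×2` matrix `M` satisfies `M J₂ Mᵀ = (det M) J₂`, so
`J_τ` preserves `J₂`; cyclicity of the trace then moves `J_τ` from the arguments of `E` onto `J₂`. -/

theorem Matrix.trace_transpose_mul_mul_mul_eq_of_mul_mul_transpose_eq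
    {n : Type*} [Fintype n] {R : Type*} [CommRing R] {A J M : Matrix n n R}
    (hM : M * J * Mᵀ = J) :
    (Mᵀ * A * M * J).trace = (A * J).trace := by
  rw [Matrix.mul_assoc, Matrix.mul_assoc, trace_mul_comm, Matrix.mul_assoc, hM]

theorem mul_J2_mul_transpose (M : Matrix (Fin 2) (Fin 2) ℝ) : M * J2 * Mᵀ = M.det • J2 := by
  ext i j
  fin_cases i <;> fin_cases j <;>
    simp [J2, det_fin_two, mul_apply, Fin.sum_univ_two] <;> ring

theorem det_Jmat {τ : ℂ} (hτ : τ.im ≠ 0) : (Jmat τ).det = 1 := by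
  rw [Jmat, det_smul, det_fin_two_of, Complex.normSq_apply, Fintype.card_fin]
  field_simp
  ring

theorem Eform_compatible_Jmat_general (g : ℕ) (S : Matrix (Fin g) (Fin g) ℝ)
    (τ : ℂ) (hτ : 0 < τ.im) :
    ∀ α β : Matrix (Fin g) (Fin 2) ℝ,
      Eform g S (α * Jmat τ) (β * Jmat τ) = Eform g S α β := by
  intro α β
  have hJ : Jmat τ * J2 * (Jmat τ)ᵀ = J2 := by
    rw [mul_J2_mul_transpose, det_Jmat hτ.ne', one_smul]
  simpa only [Eform, transpose_mul, Matrix.mul_assoc] using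
    trace_transpose_mul_mul_mul_eq_of_mul_mul_transpose_eq (A := αᵀ * S * β) hJ

/-- `E` is compatible with the complex structure `J_τ`:
`E(α · J_τ, β · J_τ) = E(α, β)`. -/
theorem Eform_compatible_Jmat (g : ℕ) (hg : 1 ≤ g) (S : Matrix (Fin g) (Fin g) ℝ)
    (τ : ℂ) (hτ : 0 < τ.im) :
    ∀ α β : Matrix (Fin g) (Fin 2) ℝ,
      Eform g S (α * Jmat τ) (β * Jmat τ) = Eform g S α β :=
  Eform_compatible_Jmat_general g S τ hτ
end

section
/- The quaternion algebra ℍ[ℚ; 2, -3] over the rationals — the 4-dimensional ℚ-algebra with basis 1, i, j, ij satisfying i² = 2, j² = -3 and ij = -ji — is a division ring. -/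
/-!
An element `x` with nonzero reduced norm `x * star x` is invertible, with inverse
`(x * star x)⁻¹ • star x`. In `ℍ[ℚ, 2, -3]` the reduced norm of `a + bi + cj + dk` is
`a² - 2b² + 3c² - 6d²`, and this form is anisotropic over `ℚ`: after clearing denominators,
a zero in `ℤ` satisfies `a² ≡ 2b² (mod 3)`, which forces `3 ∣ a, b` because `2` is not a square
mod `3`; dividing out gives the same conclusion for `c, d`, and then a smaller zero, so by
infinite descent every coordinate is divisible by all powers of `3`.
-/

open scoped Quaternion

namespace QuaternionAlgebra

section CommRing

variable {R : Type*} [CommRing R] {c₁ c₂ c₃ : R}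

theorem re_star_mul (a : ℍ[R,c₁,c₂,c₃]) : (star a * a).re = (a * star a).re := by
  simp only [re_mul, re_star, imI_star, imJ_star, imK_star]
  ring

theorem re_mul_star (a : ℍ[R,c₁,c₃]) :
    (a * star a).re = a.re ^ 2 - c₁ * a.imI ^ 2 - c₃ * a.imJ ^ 2 + c₁ * c₃ * a.imK ^ 2 := by
  simp only [re_mul, re_star, imI_star, imJ_star, imK_star]
  ring

end CommRing

theorem isUnit_of_re_mul_star_ne_zero {K : Type*} [Field K] {c₁ c₂ c₃ : K}
    {a : ℍ[K,c₁,c₂,c₃]} (h : (a * star a).re ≠ 0) : IsUnit a := by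
  set n := (a * star a).re
  have inv_smul_coe : n⁻¹ • (n : ℍ[K,c₁,c₂,c₃]) = 1 := by
    rw [← coe_smul, smul_eq_mul, inv_mul_cancel₀ h, coe_one]
  refine isUnit_iff_exists.2 ⟨n⁻¹ • star a, ?_, ?_⟩
  · rw [mul_smul_comm, mul_star_eq_coe, inv_smul_coe]
  · rw [smul_mul_assoc, star_mul_eq_coe, re_star_mul, inv_smul_coe]

end QuaternionAlgebra

section NormForm

variable {R : Type*} [CommRing R]

def normForm (a b c d : R) : R :=
  a ^ 2 - 2 * b ^ 2 + 3 * c ^ 2 - 6 * d ^ 2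

theorem normForm_mul (t a b c d : R) :
    normForm (t * a) (t * b) (t * c) (t * d) = t ^ 2 * normForm a b c d := by
  unfold normForm
  ring

theorem map_normForm {S : Type*} [CommRing S] (f : R →+* S) (a b c d : R) :
    f (normForm a b c d) = normForm (f a) (f b) (f c) (f d) := by
  simp [normForm, map_ofNat]

end NormForm

namespace Int

theorem three_dvd_of_three_dvd_sq_sub_two_mul_sq {x y : ℤ} (h : 3 ∣ x ^ 2 - 2 * y ^ 2) :
    3 ∣ x ∧ 3 ∣ y := by
  have mod_three : ∀ u v : ZMod 3, u ^ 2 - 2 * v ^ 2 = 0 → u = 0 ∧ v = 0 := by decide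
  have h3 := (ZMod.intCast_zmod_eq_zero_iff_dvd _ 3).2 h
  push_cast at h3
  obtain ⟨hx, hy⟩ := mod_three _ _ h3
  exact ⟨(ZMod.intCast_zmod_eq_zero_iff_dvd x 3).1 hx, (ZMod.intCast_zmod_eq_zero_iff_dvd y 3).1 hy⟩

theorem three_dvd_of_normForm_eq_zero_left {a b c d : ℤ} (h : normForm a b c d = 0) :
    3 ∣ a ∧ 3 ∣ b :=
  three_dvd_of_three_dvd_sq_sub_two_mul_sq
    ⟨-(c ^ 2 - 2 * d ^ 2), by unfold normForm at h; linear_combination h⟩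

theorem three_dvd_of_normForm_eq_zero {a b c d : ℤ} (h : normForm a b c d = 0) :
    3 ∣ a ∧ 3 ∣ b ∧ 3 ∣ c ∧ 3 ∣ d := by
  obtain ⟨⟨a, rfl⟩, ⟨b, rfl⟩⟩ := three_dvd_of_normForm_eq_zero_left h
  have swap : normForm (3 * a) (3 * b) c d = 3 * normForm c d a b := by
    unfold normForm
    ring
  rw [swap, mul_eq_zero, or_iff_right three_ne_zero] at h
  exact ⟨dvd_mul_right _ _, dvd_mul_right _ _, three_dvd_of_normForm_eq_zero_left h⟩

theorem pow_three_dvd_of_normForm_eq_zero (k : ℕ) {a b c d : ℤ} (h : normForm a b c d = 0) :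
    3 ^ k ∣ a ∧ 3 ^ k ∣ b ∧ 3 ^ k ∣ c ∧ 3 ^ k ∣ d := by
  induction k generalizing a b c d with
  | zero => simp
  | succ k ih =>
    obtain ⟨⟨a, rfl⟩, ⟨b, rfl⟩, ⟨c, rfl⟩, ⟨d, rfl⟩⟩ := three_dvd_of_normForm_eq_zero h
    rw [normForm_mul, mul_eq_zero, or_iff_right (by norm_num)] at h
    simp only [pow_succ', mul_dvd_mul_iff_left (three_ne_zero (α := ℤ))]
    exact ih h

theorem eq_zero_of_forall_pow_dvd {p n : ℤ} (hp : p.natAbs ≠ 1) (h : ∀ k : ℕ, p ^ k ∣ n) :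
    n = 0 := by
  by_contra hn
  obtain ⟨k, hk⟩ := finiteMultiplicity_iff.2 ⟨hp, hn⟩
  exact hk (h (k + 1))

theorem eq_zero_of_normForm_eq_zero {a b c d : ℤ} (h : normForm a b c d = 0) :
    a = 0 ∧ b = 0 ∧ c = 0 ∧ d = 0 := by
  have hdvd := fun k => pow_three_dvd_of_normForm_eq_zero k h
  refine ⟨?_, ?_, ?_, ?_⟩ <;> refine eq_zero_of_forall_pow_dvd (p := 3) (by norm_num) fun k => ?_
  exacts [(hdvd k).1, (hdvd k).2.1, (hdvd k).2.2.1, (hdvd k).2.2.2]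

end Int

theorem Rat.eq_zero_of_normForm_eq_zero {a b c d : ℚ} (h : normForm a b c d = 0) :
    a = 0 ∧ b = 0 ∧ c = 0 ∧ d = 0 := by
  obtain ⟨⟨N, hN⟩, hint⟩ :=
    IsLocalization.exist_integer_multiples_of_finite (nonZeroDivisors ℤ) ![a, b, c, d]
  choose z hz using hint
  have hz' (i : Fin 4) : (z i : ℚ) = N * ![a, b, c, d] i := by simpa using hz i
  have hz_zero : normForm (z 0) (z 1) (z 2) (z 3) = 0 := by
    apply Int.cast_injective (α := ℚ)
    rw [Int.cast_zero, ← eq_intCast (Int.castRingHom ℚ), map_normForm]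
    simp [hz', normForm_mul, h]
  obtain ⟨h0, h1, h2, h3⟩ := Int.eq_zero_of_normForm_eq_zero hz_zero
  have hN' : (N : ℚ) ≠ 0 := by exact_mod_cast nonZeroDivisors.ne_zero hN
  have hvanish (i : Fin 4) : ![a, b, c, d] i = 0 := by
    have hi := hz' i
    fin_cases i <;> simp_all
  exact ⟨hvanish 0, hvanish 1, hvanish 2, hvanish 3⟩

/-- The quaternion algebra `ℍ[ℚ; 2, -3]` (with `i² = 2`, `j² = -3`, `ij = -ji`) is a
division ring: every nonzero element is invertible. -/
theorem quaternionAlgebra_two_negThree_isDivisionRing :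
    ∀ x : ℍ[ℚ, 2, -3], x ≠ 0 → IsUnit x := by
  intro x hx
  refine QuaternionAlgebra.isUnit_of_re_mul_star_ne_zero fun hnorm => hx ?_
  have hform : normForm x.re x.imI x.imJ x.imK = (x * star x).re := by
    rw [QuaternionAlgebra.re_mul_star, normForm]
    ring
  obtain ⟨h0, h1, h2, h3⟩ := Rat.eq_zero_of_normForm_eq_zero (hform.trans hnorm)
  ext <;> simp [h0, h1, h2, h3]
end
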